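/- arXiv:1909.06730 — 2 statements merged into one kernel-verified Lean document; each statement's English description precedes it below -/
import Mathlib

section
/- Let θ* , θ_real, v ∈ ℝ and σ, ξ, θmin > 0 with ξ < (1/2)θmin − σ. Suppose |θ_real| ≥ θmin, |v| < (1/2)θmin, and θ* satisfies θ* + ((−|θ*| + √(θ*² + 4σ²))/2)·z = θ_real + v for some z with |z| ≤ 1. Then |θ*| > ξ. -/
/-!
The weight `(-|x| + √(x² + 4σ²))/2` multiplying `z` in the stationarity equation lies in `[0, σ]`,
so the left side has absolute value at most `|θ*| + σ`. The right side has absolute value at least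
`|θ_real| - |v| > θmin/2`. Hence `|θ*| ≥ θmin/2 - σ > ξ`.
-/

open Real

lemma abs_le_sqrt_sq_add_sq (x c : ℝ) : |x| ≤ √(x ^ 2 + c ^ 2) :=
  abs_le_sqrt (le_add_of_nonneg_right (sq_nonneg c))

lemma sqrt_sq_add_sq_le_abs_add_abs (x c : ℝ) : √(x ^ 2 + c ^ 2) ≤ |x| + |c| :=
  sqrt_le_iff.mpr ⟨by positivity, by
    nlinarith [sq_abs x, sq_abs c, mul_nonneg (abs_nonneg x) (abs_nonneg c)]⟩

lemma abs_add_mul_le_of_abs_le_one {x w σ z : ℝ} (hw₀ : 0 ≤ w) (hwσ : w ≤ σ) (hz : |z| ≤ 1) :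
    |x + w * z| ≤ |x| + σ :=
  calc |x + w * z| ≤ |x| + w * |z| := (abs_add_le _ _).trans_eq (by rw [abs_mul, abs_of_nonneg hw₀])
    _ ≤ |x| + σ := by gcongr; exact (mul_le_of_le_one_right hw₀ hz).trans hwσ

lemma abs_stationary_le {x σ z : ℝ} (hσ : 0 ≤ σ) (hz : |z| ≤ 1) :
    |x + ((-|x| + √(x ^ 2 + 4 * σ ^ 2)) / 2) * z| ≤ |x| + σ := by
  have hsq : 4 * σ ^ 2 = (2 * σ) ^ 2 := by ring
  have hlow := abs_le_sqrt_sq_add_sq x (2 * σ)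
  have hupp := sqrt_sq_add_sq_le_abs_add_abs x (2 * σ)
  rw [← hsq] at hlow hupp
  rw [abs_of_nonneg (by positivity : 0 ≤ 2 * σ)] at hupp
  exact abs_add_mul_le_of_abs_le_one (by linarith) (by linarith) hz

theorem no_false_negative_general (θs θreal v σ ξ θmin : ℝ) (z : ℝ)
    (hσ : 0 < σ)
    (hξσ : ξ < (1 / 2) * θmin - σ)
    (hreal : θmin ≤ |θreal|) (hv : |v| < (1 / 2) * θmin)
    (hz : |z| ≤ 1)
    (heq : θs + ((-|θs| + Real.sqrt (θs ^ 2 + 4 * σ ^ 2)) / 2) * z = θreal + v) :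
    ξ < |θs| := by
  have hleft := abs_stationary_le (x := θs) hσ.le hz
  have hright := abs_sub_abs_le_abs_add θreal v
  rw [heq] at hleft
  linarith

theorem no_false_negative (θs θreal v σ ξ θmin : ℝ) (z : ℝ)
    (hσ : 0 < σ) (hξ : 0 < ξ) (hθmin : 0 < θmin)
    (hξσ : ξ < (1 / 2) * θmin - σ)
    (hreal : θmin ≤ |θreal|) (hv : |v| < (1 / 2) * θmin)
    (hz : |z| ≤ 1)
    (heq : θs + ((-|θs| + Real.sqrt (θs ^ 2 + 4 * σ ^ 2)) / 2) * z = θreal + v) :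
    ξ < |θs| :=
  no_false_negative_general θs θreal v σ ξ θmin z hσ hξσ hreal hv hz heq
end

section
/- Let θ* , v ∈ ℝ, σ > 0, ξ > 0, and suppose θ_real = 0, |v| < ξ, and θ* + ((−|θ*| + √(θ*² + 4σ²))/2)·z = v where z = sign(θ*) when θ* ≠ 0. Then |θ*| ≤ ξ. -/
lemma abs_le_abs_add_mul_sign {θ c : ℝ} (hc : 0 ≤ c) : |θ| ≤ |θ + c * Real.sign θ| := by
  rcases lt_trichotomy θ 0 with hθ | rfl | hθ
  · rw [Real.sign_of_neg hθ, abs_of_neg hθ, abs_of_neg (by linarith)]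
    linarith
  · simp
  · rw [Real.sign_of_pos hθ, abs_of_pos hθ, abs_of_pos (by linarith)]
    linarith

theorem no_false_positive_general (θs v σ ξ : ℝ) (z : ℝ)
    (hv : |v| < ξ)
    (hz : θs ≠ 0 → z = Real.sign θs)
    (heq : θs + ((-|θs| + Real.sqrt (θs ^ 2 + 4 * σ ^ 2)) / 2) * z = v) :
    |θs| ≤ ξ := by
  rcases eq_or_ne θs 0 with rfl | hθ
  · simpa using (abs_nonneg v).trans hv.le
  have hshift : 0 ≤ (-|θs| + Real.sqrt (θs ^ 2 + 4 * σ ^ 2)) / 2 := by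
    have : |θs| ≤ Real.sqrt (θs ^ 2 + 4 * σ ^ 2) :=
      Real.abs_le_sqrt (le_add_of_nonneg_right (by positivity))
    linarith
  calc |θs| ≤ |θs + ((-|θs| + Real.sqrt (θs ^ 2 + 4 * σ ^ 2)) / 2) * Real.sign θs| :=
        abs_le_abs_add_mul_sign hshift
    _ = |v| := by rw [← hz hθ, heq]
    _ ≤ ξ := hv.le

theorem no_false_positive (θs v σ ξ : ℝ) (z : ℝ)
    (hσ : 0 < σ) (hξ : 0 < ξ) (hv : |v| < ξ)
    (hz : θs ≠ 0 → z = Real.sign θs)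
    (heq : θs + ((-|θs| + Real.sqrt (θs ^ 2 + 4 * σ ^ 2)) / 2) * z = v) :
    |θs| ≤ ξ :=
  no_false_positive_general θs v σ ξ z hv hz heq
end
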